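/- Let p, q, K be integers with 1 ≤ q ≤ p, K ≥ 1, and let λ ≥ 0. Define Q_{2p}(z) = Σ_{l∈ℤ} sinc(π(z+l))^{2p+2}, Q_{2p−2q}(z) = Σ_{l∈ℤ} sinc(π(z+l))^{2p−2q+2}, φ(u, x) = Q_{2p}(u/K)^{−1/2} Σ_{l∈ℤ} sinc(π(u/K + l))^{p+1} exp(−2πi·x·(u + lK)), μ(u) = (2πu)^{2q} sinc(πu/K)^{2q} Q_{2p−2q}(u/K)/Q_{2p}(u/K), and W(x, t) = ∫_0^K φ(u, x)·conj(φ(u, t))/(1 + λμ(u)) du. Then for all x, t ∈ ℝ, W(x, t) = ∫_{−∞}^{∞} sinc(πu/K)^{p+1} · φ(u, x) · exp(2πi·t·u) / [Q_{2p}(u/K)^{1/2}·(1 + λμ(u))] du, i.e. the kernel W admits a Fourier-integral representation over the whole real line. -/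

import Mathlib

open Real MeasureTheory ComplexConjugate

/-- `sinc x = sin x / x` for `x ≠ 0`, and `sinc 0 = 1`. -/
noncomputable def sinc (x : ℝ) : ℝ := if x = 0 then 1 else Real.sin x / x

/-- `Q_n(z) = Σ_{l ∈ ℤ} sinc(π(z+l))^n` (here `n` is the power, so `Q_{2p}` of the
paper is `Qs (2*p+2)` and `Q_{2p-2q}` is `Qs (2*p-2*q+2)`). -/
noncomputable def Qs (n : ℕ) (z : ℝ) : ℝ := ∑' l : ℤ, _root_.sinc (Real.pi * (z + l)) ^ n

/-- `φ(u,x) = Q_{2p}(u/K)^{−1/2} Σ_{l ∈ ℤ} sinc(π(u/K + l))^{p+1} exp(−2πi x (u + lK))`. -/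
noncomputable def phic (K p : ℕ) (u x : ℝ) : ℂ :=
  (((Real.sqrt (Qs (2 * p + 2) (u / K)))⁻¹ : ℝ) : ℂ) *
    ∑' l : ℤ, ((_root_.sinc (Real.pi * (u / K + l)) ^ (p + 1) : ℝ) : ℂ) *
      Complex.exp (-2 * (Real.pi : ℂ) * Complex.I * (x : ℂ) * ((u : ℂ) + (l : ℂ) * (K : ℂ)))

/-- `μ(u) = (2πu)^{2q} sinc(πu/K)^{2q} Q_{2p−2q}(u/K)/Q_{2p}(u/K)`. -/
noncomputable def muc (K p q : ℕ) (u : ℝ) : ℝ :=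
  (2 * Real.pi * u) ^ (2 * q) * _root_.sinc (Real.pi * u / K) ^ (2 * q) *
    Qs (2 * p - 2 * q + 2) (u / K) / Qs (2 * p + 2) (u / K)

/-- The asymptotic equivalent kernel on ℝ:
`W(x,t) = ∫_0^K φ(u,x) conj(φ(u,t)) / (1 + λμ(u)) du`. -/
noncomputable def Wker (K p q : ℕ) (lam : ℝ) (x t : ℝ) : ℂ :=
  ∫ u in (0:ℝ)..(K : ℝ),
    phic K p u x * conj (phic K p u t) / (((1 + lam * muc K p q u : ℝ)) : ℂ)

/-!
The integrand `F` of the right-hand side factors as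
`F(u) = sinc(πu/K)^{p+1} exp(2πitu) · g(u)` with `g = φ(·,x) / (Q_{2p}(·/K)^{1/2} (1 + λμ))`,
and `φ(·,x)`, `μ` and `Q_{2p}(·/K)` are `K`-periodic. Hence the `K`-periodisation of `F` is
`g(v) · Σₗ sinc(π(v/K + l))^{p+1} exp(2πit(v + lK)) = g(v) Q_{2p}(v/K)^{1/2} conj φ(v,t)`,
which is the integrand of `W(x,t)`. Since `sinc(πw)^{p+1} = O(1/(1+w²))` for `p ≥ 1` and
`Q_{2p} ≥ (2/π)^{2p+2}` (Jordan's inequality at the lattice point nearest to `-z`), `F` is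
integrable, so `∫_ℝ F` is the integral of its periodisation over the fundamental domain `(0, K]`.
-/

theorem sinc_eq_real_sinc : _root_.sinc = Real.sinc := rfl

theorem mul_sinc (x : ℝ) : x * Real.sinc x = Real.sin x := by
  by_cases hx : x = 0
  · simp [hx]
  · rw [Real.sinc_of_ne_zero hx, mul_div_cancel₀ _ hx]

theorem sinc_sq_mul_one_add_sq_le (x : ℝ) : Real.sinc x ^ 2 * (1 + x ^ 2) ≤ 2 := by
  have hsinc : Real.sinc x ^ 2 ≤ 1 := (sq_le_one_iff_abs_le_one _).mpr (Real.abs_sinc_le_one x)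
  calc Real.sinc x ^ 2 * (1 + x ^ 2) = Real.sinc x ^ 2 + (x * Real.sinc x) ^ 2 := by ring
    _ ≤ 1 + 1 := by rw [mul_sinc]; exact add_le_add hsinc (Real.sin_sq_le_one x)
    _ = 2 := by norm_num

theorem abs_sinc_pi_mul_pow_le {n : ℕ} (hn : 2 ≤ n) (w : ℝ) :
    |Real.sinc (π * w)| ^ n ≤ 2 * (1 + w ^ 2)⁻¹ := by
  have hpi : w ^ 2 ≤ (π * w) ^ 2 := by
    rw [mul_pow]; exact le_mul_of_one_le_left (sq_nonneg w) (by nlinarith [pi_gt_three])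
  calc |Real.sinc (π * w)| ^ n ≤ |Real.sinc (π * w)| ^ 2 :=
        pow_le_pow_of_le_one (abs_nonneg _) (Real.abs_sinc_le_one _) hn
    _ ≤ 2 * (1 + w ^ 2)⁻¹ := by
        rw [sq_abs, ← div_eq_mul_inv, le_div_iff₀ (by positivity)]
        nlinarith [sinc_sq_mul_one_add_sq_le (π * w), sq_nonneg (Real.sinc (π * w))]

theorem two_div_pi_le_abs_sinc {x : ℝ} (hx : |x| ≤ π / 2) : 2 / π ≤ |Real.sinc x| := by
  by_cases hx0 : x = 0
  · rw [hx0, Real.sinc_zero, abs_one, div_le_one pi_pos]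
    linarith [pi_gt_three]
  · rw [Real.sinc_of_ne_zero hx0, abs_div, le_div_iff₀ (abs_pos.mpr hx0)]
    exact Real.mul_abs_le_abs_sin hx

/-- Peetre's inequality for the weight `1 + w ^ 2`. -/
theorem inv_one_add_sq_add_le (z w : ℝ) :
    (1 + (z + w) ^ 2)⁻¹ ≤ 2 * (1 + z ^ 2) * (1 + w ^ 2)⁻¹ := by
  rw [inv_eq_one_div, ← div_eq_mul_inv, div_le_div_iff₀ (by positivity) (by positivity)]
  nlinarith [sq_nonneg (2 * z + w), sq_nonneg (z * (z + w))]

theorem summable_inv_one_add_sq_int : Summable fun l : ℤ => (1 + (l : ℝ) ^ 2)⁻¹ := by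
  refine (summable_one_div_int_pow.mpr one_lt_two).of_norm_bounded_eventually ?_
  filter_upwards [Filter.eventually_cofinite_ne 0] with l hl
  rw [Real.norm_of_nonneg (by positivity), one_div]
  exact inv_anti₀ (by positivity) (le_add_of_nonneg_left zero_le_one)

theorem periodic_tsum_comp_add_int_mul {E : Type*} [AddCommMonoid E] [TopologicalSpace E]
    (f : ℝ → E) (c : ℝ) : Function.Periodic (fun u => ∑' l : ℤ, f (u + l * c)) c := fun u => by
  have hshift := (Equiv.addRight (1 : ℤ)).tsum_eq fun l : ℤ => f (u + l * c)
  simp only [Equiv.coe_addRight, Int.cast_add, Int.cast_one] at hshift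
  dsimp only
  rw [← hshift]
  exact tsum_congr fun l => congrArg f (by ring)

theorem abs_sinc_pi_add_pow_le {n : ℕ} (hn : 2 ≤ n) (z w : ℝ) :
    |Real.sinc (π * (z + w))| ^ n ≤ 4 * (1 + z ^ 2) * (1 + w ^ 2)⁻¹ := by
  calc |Real.sinc (π * (z + w))| ^ n ≤ 2 * (1 + (z + w) ^ 2)⁻¹ := abs_sinc_pi_mul_pow_le hn _
    _ ≤ 2 * (2 * (1 + z ^ 2) * (1 + w ^ 2)⁻¹) := by gcongr; exact inv_one_add_sq_add_le z w
    _ = 4 * (1 + z ^ 2) * (1 + w ^ 2)⁻¹ := by ring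

theorem summable_abs_sinc_pi_add_int_pow {n : ℕ} (hn : 2 ≤ n) (z : ℝ) :
    Summable fun l : ℤ => |Real.sinc (π * (z + l))| ^ n :=
  (summable_inv_one_add_sq_int.mul_left (4 * (1 + z ^ 2))).of_nonneg_of_le
    (fun _ => by positivity) fun l => abs_sinc_pi_add_pow_le hn z l

theorem exists_tsum_abs_sinc_pi_add_int_pow_le {n : ℕ} (hn : 2 ≤ n) :
    ∃ C, ∀ z : ℝ, ∑' l : ℤ, |Real.sinc (π * (z + l))| ^ n ≤ C := by
  refine ⟨5 * ∑' l : ℤ, (1 + (l : ℝ) ^ 2)⁻¹, fun z => ?_⟩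
  have hper := periodic_tsum_comp_add_int_mul (fun w => |Real.sinc (π * w)| ^ n) 1
  simp only [mul_one] at hper
  set r := z - round z
  have hr : 4 * (1 + r ^ 2) ≤ 5 := by
    have := abs_sub_round z
    nlinarith [abs_le.mp this, sq_abs r]
  rw [← hper.sub_int_mul_eq (round z), mul_one, ← tsum_mul_left]
  refine (summable_abs_sinc_pi_add_int_pow hn r).tsum_le_tsum (fun l => ?_)
    (summable_inv_one_add_sq_int.mul_left 5)
  exact (abs_sinc_pi_add_pow_le hn r l).trans (by gcongr)

theorem integral_eq_setIntegral_Ioc_tsum_add_int_mul {E : Type*} [NormedAddCommGroup E]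
    [NormedSpace ℝ E] {f : ℝ → E} (hf : Integrable f) {T : ℝ} (hT : 0 < T) :
    ∫ u, f u = ∫ v in Set.Ioc 0 T, ∑' l : ℤ, f (v + l * T) := by
  have hD := isAddFundamentalDomain_Ioc hT 0
  rw [zero_add] at hD
  let e : ℤ ≃ AddSubgroup.zmultiples T := Equiv.ofBijective (fun l => ⟨l • T, l, rfl⟩)
    ⟨fun a b h => (zsmul_left_strictMono hT).injective (congrArg Subtype.val h),
      fun ⟨_, l, hl⟩ => ⟨l, Subtype.ext hl⟩⟩
  have he : ∀ (l : ℤ) (v : ℝ), e l +ᵥ v = v + l * T := fun l v => by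
    rw [AddSubgroup.vadd_def, vadd_eq_add, add_comm]
    exact congrArg _ (zsmul_eq_mul T l)
  rw [integral_tsum (fun l => (hf.comp_add_right _).aestronglyMeasurable.restrict)]
  · rw [hD.integral_eq_tsum'' f hf, ← e.tsum_eq]
    simp only [he]
  · have hnorm := hD.lintegral_eq_tsum'' fun v => ‖f v‖ₑ
    rw [← e.tsum_eq] at hnorm
    simp only [he] at hnorm
    exact hnorm ▸ hf.hasFiniteIntegral.ne

theorem Qs_periodic (n : ℕ) : Function.Periodic (Qs n) 1 := by
  show Function.Periodic (fun z => ∑' l : ℤ, _root_.sinc (π * (z + l)) ^ n) 1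
  simpa only [mul_one] using periodic_tsum_comp_add_int_mul (fun w => _root_.sinc (π * w) ^ n) 1

theorem Qs_comp_div_periodic (n K : ℕ) : Function.Periodic (fun u => Qs n (u / K)) K := by
  simpa only [one_mul] using (Qs_periodic n).div_const (K : ℝ)

theorem summable_sinc_pi_add_int_pow {n : ℕ} (hn : 2 ≤ n) (he : Even n) (z : ℝ) :
    Summable fun l : ℤ => Real.sinc (π * (z + l)) ^ n := by
  simpa only [he.pow_abs] using summable_abs_sinc_pi_add_int_pow hn z

theorem Qs_nonneg {n : ℕ} (he : Even n) (z : ℝ) : 0 ≤ Qs n z :=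
  tsum_nonneg fun _ => he.pow_nonneg _

theorem two_div_pi_pow_le_Qs {n : ℕ} (hn : 2 ≤ n) (he : Even n) (z : ℝ) :
    (2 / π) ^ n ≤ Qs n z := by
  have hw : |π * (z + (-round z : ℤ))| ≤ π / 2 := by
    rw [abs_mul, abs_of_pos pi_pos, Int.cast_neg, ← sub_eq_add_neg]
    nlinarith [abs_sub_round z, pi_pos]
  calc (2 / π) ^ n ≤ |_root_.sinc (π * (z + (-round z : ℤ)))| ^ n :=
        pow_le_pow_left₀ (by positivity) (two_div_pi_le_abs_sinc hw) n
    _ = _root_.sinc (π * (z + (-round z : ℤ))) ^ n := he.pow_abs _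
    _ ≤ Qs n z :=
        (summable_sinc_pi_add_int_pow hn he z).le_tsum _ fun _ _ => he.pow_nonneg _

theorem inv_sqrt_Qs_le (p : ℕ) (z : ℝ) : (√(Qs (2 * p + 2) z))⁻¹ ≤ (π / 2) ^ (p + 1) := by
  have hQ : ((2 / π) ^ (p + 1)) ^ 2 ≤ Qs (2 * p + 2) z := by
    rw [← pow_mul, mul_comm]; exact two_div_pi_pow_le_Qs (by omega) ⟨p + 1, by ring⟩ z
  rw [← inv_div, inv_pow]
  exact inv_anti₀ (by positivity) (Real.le_sqrt_of_sq_le hQ)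

noncomputable def sincSeries (K p : ℕ) (s u : ℝ) : ℂ :=
  ∑' l : ℤ, ((_root_.sinc (π * (u / K + l)) ^ (p + 1) : ℝ) : ℂ) *
    Complex.exp (2 * π * Complex.I * s * (u + l * K))

theorem phic_eq_sincSeries (K p : ℕ) (u x : ℝ) :
    phic K p u x = ((√(Qs (2 * p + 2) (u / K)))⁻¹ : ℝ) * sincSeries K p (-x) u := by
  unfold phic sincSeries
  push_cast
  congr! 5
  ring

theorem conj_phic (K p : ℕ) (u t : ℝ) :
    conj (phic K p u t) = ((√(Qs (2 * p + 2) (u / K)))⁻¹ : ℝ) * sincSeries K p t u := by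
  rw [phic_eq_sincSeries, map_mul, Complex.conj_ofReal, sincSeries, sincSeries,
    starRingEnd_apply, tsum_star]
  congr 1
  refine tsum_congr fun l => ?_
  rw [star_mul', ← starRingEnd_apply, ← starRingEnd_apply, Complex.conj_ofReal,
    ← Complex.exp_conj]
  simp only [map_mul, map_add, Complex.conj_I, Complex.conj_ofReal, map_ofNat, map_intCast,
    map_natCast]
  push_cast
  ring_nf

theorem sincSeries_periodic (K p : ℕ) (s : ℝ) : Function.Periodic (sincSeries K p s) K := by
  intro u
  rcases eq_or_ne (K : ℝ) 0 with hK | hK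
  · rw [hK, add_zero]
  have hshift := (Equiv.addRight (1 : ℤ)).tsum_eq fun l : ℤ =>
    ((_root_.sinc (π * (u / K + l)) ^ (p + 1) : ℝ) : ℂ) *
      Complex.exp (2 * π * Complex.I * s * (u + l * K))
  rw [sincSeries, sincSeries, ← hshift]
  refine tsum_congr fun l => ?_
  simp only [Equiv.coe_addRight]
  push_cast
  rw [add_div, div_self hK]
  ring_nf

theorem norm_sincSeries_le {p : ℕ} (hp : 1 ≤ p) (K : ℕ) (s u : ℝ) :
    ‖sincSeries K p s u‖ ≤ ∑' l : ℤ, |Real.sinc (π * (u / K + l))| ^ (p + 1) := by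
  have hterm : ∀ l : ℤ, ‖((_root_.sinc (π * (u / K + l)) ^ (p + 1) : ℝ) : ℂ) *
      Complex.exp (2 * π * Complex.I * s * (u + l * K))‖ =
        |Real.sinc (π * (u / K + l))| ^ (p + 1) := fun l => by
    rw [norm_mul, Complex.norm_exp, Complex.norm_real, Real.norm_eq_abs, abs_pow]
    simp [sinc_eq_real_sinc]
  simp only [sincSeries, ← hterm]
  exact norm_tsum_le_tsum_norm (by simpa only [hterm] using
    summable_abs_sinc_pi_add_int_pow (by omega) (u / K))

theorem phic_periodic (K p : ℕ) (x : ℝ) : Function.Periodic (fun u => phic K p u x) K := by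
  intro u
  simp only [phic_eq_sincSeries, sincSeries_periodic K p (-x) u, Qs_comp_div_periodic _ K u]

theorem exists_norm_phic_le {p : ℕ} (hp : 1 ≤ p) (K : ℕ) (x : ℝ) :
    ∃ C, ∀ u, ‖phic K p u x‖ ≤ C := by
  obtain ⟨C, hC⟩ := exists_tsum_abs_sinc_pi_add_int_pow_le (n := p + 1) (by omega)
  refine ⟨(π / 2) ^ (p + 1) * C, fun u => ?_⟩
  rw [phic_eq_sincSeries, norm_mul, Complex.norm_real, Real.norm_of_nonneg (by positivity)]
  exact mul_le_mul (inv_sqrt_Qs_le p _) ((norm_sincSeries_le hp K _ u).trans (hC _))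
    (norm_nonneg _) (by positivity)

theorem muc_nonneg (K p q : ℕ) (u : ℝ) : 0 ≤ muc K p q u := by
  rw [muc, ← mul_pow]
  exact div_nonneg
    (mul_nonneg ((even_two_mul q).pow_nonneg _) (Qs_nonneg ⟨p - q + 1, by omega⟩ _))
    (Qs_nonneg ⟨p + 1, by ring⟩ _)

theorem muc_periodic (K p q : ℕ) : Function.Periodic (muc K p q) K := by
  intro u
  rcases eq_or_ne (K : ℝ) 0 with hK | hK
  · rw [hK, add_zero]
  have hsin : ∀ v, 2 * π * v * _root_.sinc (π * v / K) = 2 * K * Real.sin (π * v / K) := by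
    intro v
    rw [sinc_eq_real_sinc, ← mul_sinc (π * v / K)]
    field_simp
  have hQ := fun n => Qs_comp_div_periodic n K u
  simp only [muc, ← mul_pow, hsin] at hQ ⊢
  rw [hQ, hQ, show π * (u + K) / K = π * u / K + π by field_simp, Real.sin_add_pi, mul_neg,
    (even_two_mul q).neg_pow]

theorem norm_exp_two_pi_I_mul (t u : ℝ) : ‖Complex.exp (2 * π * Complex.I * t * u)‖ = 1 := by
  rw [← Complex.norm_exp_ofReal_mul_I (2 * π * t * u)]
  push_cast
  ring_nf

noncomputable def kernelIntegrand (K p q : ℕ) (lam x t u : ℝ) : ℂ :=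
  ((_root_.sinc (π * u / K) ^ (p + 1) : ℝ) : ℂ) * phic K p u x *
      Complex.exp (2 * π * Complex.I * t * u) /
    ((√(Qs (2 * p + 2) (u / K)) * (1 + lam * muc K p q u) : ℝ) : ℂ)

theorem measurable_Qs_comp_div (n K : ℕ) : Measurable fun u : ℝ => Qs n (u / K) := by
  simp only [Qs, sinc_eq_real_sinc]
  exact Measurable.tsum fun _ => by fun_prop

theorem measurable_phic (K p : ℕ) (x : ℝ) : Measurable fun u => phic K p u x := by
  simp only [phic_eq_sincSeries, sincSeries, sinc_eq_real_sinc]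
  exact ((measurable_Qs_comp_div _ K).sqrt.inv.complex_ofReal).mul
    (Measurable.tsum fun _ => by fun_prop)

theorem measurable_muc (K p q : ℕ) : Measurable (muc K p q) := by
  have := measurable_Qs_comp_div (2 * p - 2 * q + 2) K
  have := measurable_Qs_comp_div (2 * p + 2) K
  unfold muc
  simp only [sinc_eq_real_sinc]
  fun_prop

theorem measurable_kernelIntegrand (K p q : ℕ) (lam x t : ℝ) :
    Measurable (kernelIntegrand K p q lam x t) := by
  have := measurable_Qs_comp_div (2 * p + 2) K
  have := measurable_phic K p x
  have := measurable_muc K p q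
  unfold kernelIntegrand
  simp only [sinc_eq_real_sinc]
  fun_prop

theorem norm_kernelIntegrand_le (K p q : ℕ) {lam : ℝ} (hlam : 0 ≤ lam) (x t u : ℝ) :
    ‖kernelIntegrand K p q lam x t u‖ ≤
      |Real.sinc (π * u / K)| ^ (p + 1) * ‖phic K p u x‖ * (π / 2) ^ (p + 1) := by
  have hM : 1 ≤ 1 + lam * muc K p q u := le_add_of_nonneg_right (mul_nonneg hlam (muc_nonneg ..))
  have hQ : (√(Qs (2 * p + 2) (u / K)) * (1 + lam * muc K p q u))⁻¹ ≤ (π / 2) ^ (p + 1) := by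
    rw [mul_inv]
    simpa only [mul_one] using mul_le_mul (inv_sqrt_Qs_le p (u / K)) (inv_le_one_of_one_le₀ hM)
      (by positivity) (by positivity)
  rw [kernelIntegrand, sinc_eq_real_sinc, norm_div, norm_mul, norm_mul, norm_exp_two_pi_I_mul,
    mul_one, Complex.norm_real, Complex.norm_real, Real.norm_eq_abs,
    Real.norm_of_nonneg (by positivity), abs_pow, div_eq_mul_inv]
  gcongr

theorem integrable_kernelIntegrand {K p : ℕ} (hK : (K : ℝ) ≠ 0) (hp : 1 ≤ p) (q : ℕ) {lam : ℝ}
    (hlam : 0 ≤ lam) (x t : ℝ) : Integrable (kernelIntegrand K p q lam x t) := by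
  obtain ⟨C, hC⟩ := exists_norm_phic_le hp K x
  refine ((integrable_inv_one_add_sq.comp_div hK).const_mul (2 * C * (π / 2) ^ (p + 1))).mono'
    (measurable_kernelIntegrand K p q lam x t).aestronglyMeasurable (ae_of_all _ fun u => ?_)
  have hsinc := abs_sinc_pi_mul_pow_le (n := p + 1) (by omega) (u / K)
  rw [← mul_div_assoc] at hsinc
  calc ‖kernelIntegrand K p q lam x t u‖
      ≤ |Real.sinc (π * u / K)| ^ (p + 1) * ‖phic K p u x‖ * (π / 2) ^ (p + 1) :=
        norm_kernelIntegrand_le K p q hlam x t u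
    _ ≤ 2 * (1 + (u / K) ^ 2)⁻¹ * C * (π / 2) ^ (p + 1) := by gcongr; exact hC u
    _ = 2 * C * (π / 2) ^ (p + 1) * (1 + (u / K) ^ 2)⁻¹ := by ring

theorem tsum_kernelIntegrand_add_int_mul {K : ℕ} (hK : (K : ℝ) ≠ 0) (p q : ℕ) (lam x t v : ℝ) :
    ∑' l : ℤ, kernelIntegrand K p q lam x t (v + l * K) =
      phic K p v x * conj (phic K p v t) / ((1 + lam * muc K p q v : ℝ) : ℂ) := by
  have hterm : ∀ l : ℤ, kernelIntegrand K p q lam x t (v + l * K) =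
      ((_root_.sinc (π * (v / K + l)) ^ (p + 1) : ℝ) : ℂ) *
          Complex.exp (2 * π * Complex.I * t * (v + l * K)) *
        (phic K p v x / ((√(Qs (2 * p + 2) (v / K)) * (1 + lam * muc K p q v) : ℝ) : ℂ)) := by
    intro l
    have hφ : phic K p (v + l * K) x = phic K p v x := (phic_periodic K p x).int_mul l v
    have hQ : Qs (2 * p + 2) ((v + l * K) / K) = Qs (2 * p + 2) (v / K) :=
      (Qs_comp_div_periodic _ K).int_mul l v
    rw [kernelIntegrand, hφ, hQ, (muc_periodic K p q).int_mul l v,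
      show π * (v + l * K) / K = π * (v / K + l) by field_simp]
    push_cast
    ring
  rw [tsum_congr hterm, tsum_mul_right, conj_phic]
  change sincSeries K p t v * _ = _
  rw [Complex.ofReal_mul, Complex.ofReal_inv]
  ring

theorem stmt6 (p q K : ℕ) (hq : 1 ≤ q) (hqp : q ≤ p) (hK : 1 ≤ K)
    (lam : ℝ) (hlam : 0 ≤ lam) (x t : ℝ) :
    Wker K p q lam x t =
      ∫ u : ℝ,
        ((_root_.sinc (Real.pi * u / K) ^ (p + 1) : ℝ) : ℂ) * phic K p u x *
            Complex.exp (2 * (Real.pi : ℂ) * Complex.I * (t : ℂ) * (u : ℂ)) /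
          (((Real.sqrt (Qs (2 * p + 2) (u / K)) * (1 + lam * muc K p q u) : ℝ)) : ℂ) := by
  have hKpos : (0 : ℝ) < K := by exact_mod_cast hK
  change _ = ∫ u, kernelIntegrand K p q lam x t u
  rw [Wker, intervalIntegral.integral_of_le hKpos.le, integral_eq_setIntegral_Ioc_tsum_add_int_mul
    (integrable_kernelIntegrand hKpos.ne' (hq.trans hqp) q hlam x t) hKpos]
  exact setIntegral_congr_fun measurableSet_Ioc fun v _ =>
    (tsum_kernelIntegrand_add_int_mul hKpos.ne' p q lam x t v).symm
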